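/- arXiv:1705.10904 — 2 statements merged into one kernel-verified Lean document; each statement's English description precedes it below -/
import Mathlib

section
/- Let C and X be finite types, let p_c and q_c be pmfs on C, and for each c : C let P c and Q c be pmfs on X. For each c with p_c c + q_c c > 0, define the mixture pmf M c on X by M c x = (p_c c * P c x + q_c c * Q c x) / (p_c c + q_c c). Then C(G) = ( − log 4 + 2 * D_JS(p_c ‖ q_c) ) + Σ_{c : C} p_c c * D_KL(P c ‖ M c) + Σ_{c : C} q_c c * D_KL(Q c ‖ M c), where summands whose pmf coefficient (p_c c or q_c c) is 0 are taken to be 0. -/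
/-! Where `p(c,x) = p_c c P c x > 0`, the ratio `p(c,x) / (p(c,x) + q(c,x))` factors as
`(p_c c / (p_c c + q_c c)) * (P c x / M c x)`, so each logarithm in `C(G)` splits into a term
depending only on `c` and one of the summands of `D_KL(P c ‖ M c)`. Summing the first kind over
`x` leaves `Σ_c p_c c log (p_c c / (p_c c + q_c c))` and its `q`-analogue, which is exactly
`2 D_JS(p_c ‖ q_c) - log 4`. The conventions `0 log (0 / _) = 0` need no case split in the
sums, because `0 * _ = 0` in Lean. -/

open Finset

/-- Kullback–Leibler divergence `D_KL(p ‖ q) = Σ_x p x * log (p x / q x)`,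
with the convention that a summand is `0` when `p x = 0`. -/
noncomputable def klDiv {α : Type*} [Fintype α] (p q : α → ℝ) : ℝ :=
  ∑ x, if p x = 0 then 0 else p x * Real.log (p x / q x)

/-- Jensen–Shannon divergence
`D_JS(p ‖ q) = (1/2) D_KL(p ‖ m) + (1/2) D_KL(q ‖ m)` with `m = (p + q)/2`. -/
noncomputable def jsDiv {α : Type*} [Fintype α] (p q : α → ℝ) : ℝ :=
  (1 / 2) * klDiv p (fun x => (p x + q x) / 2) +
  (1 / 2) * klDiv q (fun x => (p x + q x) / 2)

/-- The weakly supervised GAN criterion `C(G)`: the GAN objective at the optimal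
discriminator, for joint densities `p(c,x) = p_c c * P c x` and `q(c,x) = q_c c * Q c x`.
Summands with zero numerator are taken to be `0`, and only points with
`p(c,x) + q(c,x) > 0` contribute. -/
noncomputable def CG {C X : Type*} [Fintype C] [Fintype X]
    (pc qc : C → ℝ) (P Q : C → X → ℝ) : ℝ :=
  ∑ c, ∑ x,
    if 0 < pc c * P c x + qc c * Q c x then
      (if pc c * P c x = 0 then 0 else
        pc c * P c x * Real.log (pc c * P c x / (pc c * P c x + qc c * Q c x))) +
      (if qc c * Q c x = 0 then 0 else
        qc c * Q c x * Real.log (qc c * Q c x / (pc c * P c x + qc c * Q c x)))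
    else 0

open Real

lemma ite_eq_zero_zero_mul (a t : ℝ) : (if a = 0 then 0 else a * t) = a * t := by
  split_ifs with h <;> simp [h]

lemma klDiv_eq_sum {α : Type*} [Fintype α] (p q : α → ℝ) :
    klDiv p q = ∑ x, p x * log (p x / q x) := by
  simp only [klDiv, ite_eq_zero_zero_mul]

lemma CG_eq_sum {C X : Type*} [Fintype C] [Fintype X] (pc qc : C → ℝ) (P Q : C → X → ℝ)
    (hpc0 : ∀ c, 0 ≤ pc c) (hqc0 : ∀ c, 0 ≤ qc c)
    (hP0 : ∀ c x, 0 ≤ P c x) (hQ0 : ∀ c x, 0 ≤ Q c x) :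
    CG pc qc P Q = ∑ c, ∑ x,
      (pc c * P c x * log (pc c * P c x / (pc c * P c x + qc c * Q c x)) +
        qc c * Q c x * log (qc c * Q c x / (pc c * P c x + qc c * Q c x))) := by
  refine sum_congr rfl fun c _ => sum_congr rfl fun x _ => ?_
  have hp : 0 ≤ pc c * P c x := mul_nonneg (hpc0 c) (hP0 c x)
  have hq : 0 ≤ qc c * Q c x := mul_nonneg (hqc0 c) (hQ0 c x)
  simp only [ite_eq_zero_zero_mul]
  split_ifs with hpos
  · rfl
  · obtain ⟨hp', hq'⟩ : pc c * P c x = 0 ∧ qc c * Q c x = 0 := by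
      constructor <;> linarith
    simp [hp', hq']

lemma mul_log_div_mixture {a b u v m : ℝ} (ha : 0 ≤ a) (hb : 0 ≤ b) (hu : 0 ≤ u) (hv : 0 ≤ v)
    (hm : 0 < a + b → m = (a * u + b * v) / (a + b)) :
    a * u * log (a * u / (a * u + b * v)) = a * u * log (a / (a + b)) + a * (u * log (u / m)) := by
  rcases ha.eq_or_lt with rfl | ha
  · simp
  rcases hu.eq_or_lt with rfl | hu
  · simp
  have hab : 0 < a + b := by linarith
  have hm' : 0 < m := by rw [hm hab]; positivity
  have hfactor : a * u / (a * u + b * v) = a / (a + b) * (u / m) := by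
    rw [hm hab]
    field_simp
  rw [hfactor, log_mul (by positivity) (by positivity)]
  ring

lemma sum_mul_log_div_mixture {X : Type*} [Fintype X] {a b : ℝ} (ha : 0 ≤ a) (hb : 0 ≤ b)
    {P Q M : X → ℝ} (hP0 : ∀ x, 0 ≤ P x) (hP1 : ∑ x, P x = 1) (hQ0 : ∀ x, 0 ≤ Q x)
    (hM : 0 < a + b → ∀ x, M x = (a * P x + b * Q x) / (a + b)) :
    ∑ x, a * P x * log (a * P x / (a * P x + b * Q x)) =
      a * log (a / (a + b)) + a * klDiv P M := by
  simp only [mul_log_div_mixture ha hb (hP0 _) (hQ0 _) (fun hab => hM hab _),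
    sum_add_distrib, ← sum_mul, ← mul_sum, hP1, mul_one, klDiv_eq_sum]

lemma mul_log_div_midpoint {a b : ℝ} (ha : 0 ≤ a) (hb : 0 ≤ b) :
    a * log (a / ((a + b) / 2)) = a * log (a / (a + b)) + a * log 2 := by
  rcases ha.eq_or_lt with rfl | ha
  · simp
  rw [div_div_eq_mul_div, mul_div_right_comm, log_mul (by positivity) two_ne_zero]
  ring

lemma klDiv_midpoint {α : Type*} [Fintype α] {p q : α → ℝ} (hp0 : ∀ x, 0 ≤ p x)
    (hp1 : ∑ x, p x = 1) (hq0 : ∀ x, 0 ≤ q x) :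
    klDiv p (fun x => (p x + q x) / 2) = ∑ x, p x * log (p x / (p x + q x)) + log 2 := by
  simp only [klDiv_eq_sum, mul_log_div_midpoint (hp0 _) (hq0 _), sum_add_distrib, ← sum_mul,
    hp1, one_mul]

lemma two_mul_jsDiv {α : Type*} [Fintype α] {p q : α → ℝ} (hp0 : ∀ x, 0 ≤ p x)
    (hp1 : ∑ x, p x = 1) (hq0 : ∀ x, 0 ≤ q x) (hq1 : ∑ x, q x = 1) :
    2 * jsDiv p q = ∑ x, p x * log (p x / (p x + q x)) + ∑ x, q x * log (q x / (p x + q x)) +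
      log 4 := by
  have hq : klDiv q (fun x => (p x + q x) / 2) = ∑ x, q x * log (q x / (p x + q x)) + log 2 := by
    simpa only [add_comm (q _)] using klDiv_midpoint hq0 hq1 hp0
  have hlog4 : log 4 = 2 * log 2 := by
    rw [show (4 : ℝ) = 2 ^ 2 by norm_num, log_pow, Nat.cast_ofNat]
  rw [jsDiv, klDiv_midpoint hp0 hp1 hq0, hq, hlog4]
  ring

/-- The central computation in the proof sketch of Theorem 2:
`C(G) = (− log 4 + 2 D_JS(p_c ‖ q_c)) + Σ_c p_c c * D_KL(P c ‖ M c) + Σ_c q_c c * D_KL(Q c ‖ M c)`,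
where `M c` is the mixture `(p_c c * P c + q_c c * Q c) / (p_c c + q_c c)`. -/
theorem CG_decomposition
    {C X : Type*} [Fintype C] [Fintype X]
    (pc qc : C → ℝ)
    (hpc0 : ∀ c, 0 ≤ pc c) (hpc1 : ∑ c, pc c = 1)
    (hqc0 : ∀ c, 0 ≤ qc c) (hqc1 : ∑ c, qc c = 1)
    (P Q : C → X → ℝ)
    (hP0 : ∀ c x, 0 ≤ P c x) (hP1 : ∀ c, ∑ x, P c x = 1)
    (hQ0 : ∀ c x, 0 ≤ Q c x) (hQ1 : ∀ c, ∑ x, Q c x = 1)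
    (M : C → X → ℝ)
    (hM : ∀ c, 0 < pc c + qc c →
      ∀ x, M c x = (pc c * P c x + qc c * Q c x) / (pc c + qc c)) :
    CG pc qc P Q =
      (-Real.log 4 + 2 * jsDiv pc qc) +
        (∑ c, if pc c = 0 then 0 else pc c * klDiv (P c) (M c)) +
        (∑ c, if qc c = 0 then 0 else qc c * klDiv (Q c) (M c)) := by
  have hp (c : C) := sum_mul_log_div_mixture (hpc0 c) (hqc0 c) (hP0 c) (hP1 c) (hQ0 c) (hM c)
  have hq (c : C) : ∑ x, qc c * Q c x * log (qc c * Q c x / (pc c * P c x + qc c * Q c x)) =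
      qc c * log (qc c / (pc c + qc c)) + qc c * klDiv (Q c) (M c) := by
    have hM' : 0 < qc c + pc c → ∀ x, M c x = (qc c * Q c x + pc c * P c x) / (qc c + pc c) :=
      fun hab x => by rw [add_comm] at hab; rw [hM c hab, add_comm, add_comm (qc c)]
    rw [add_comm (pc c), ← sum_mul_log_div_mixture (hqc0 c) (hpc0 c) (hQ0 c) (hQ1 c) (hP0 c) hM']
    exact sum_congr rfl fun x _ => by rw [add_comm (pc c * P c x)]
  rw [CG_eq_sum pc qc P Q hpc0 hqc0 hP0 hQ0, two_mul_jsDiv hpc0 hpc1 hqc0 hqc1]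
  simp only [sum_add_distrib, hp, hq, ite_eq_zero_zero_mul]
  ring
end

section
/- Let C and X be finite types, let p_c and q_c be pmfs on C with p_c = q_c, and for each c : C let P c and Q c be pmfs on X. Then C(G) ≥ − log 4, and C(G) = − log 4 if and only if P c = Q c for every c : C with p_c c > 0. In particular, when the input category distribution matches the target category distribution, the weakly supervised GAN criterion recovers the classical GAN optimum value − log 4. -/
open Finset

/-!
Write `p`, `q` for the two joint densities and `m = (p + q) / 2` for their mixture. Each summand
of `C(G)`, plus `(p + q) log 2`, equals `m klFun (p / m) + m klFun (q / m)`; since both densities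
have mass one, `C(G) + log 4 = KL(p ‖ m) + KL(q ‖ m) ≥ 0`, and as `klFun` vanishes only at `1`,
equality holds iff `p = q` pointwise. When `p_c = q_c`, the identity `p_c c * P c x = p_c c * Q c x`
says `P c = Q c` for every category of positive weight.
-/

open Real InformationTheory

lemma mul_klFun_div (a : ℝ) {m : ℝ} (hm : m ≠ 0) :
    m * klFun (a / m) = a * log (a / m) + m - a := by
  rw [klFun_apply]
  field_simp

lemma mul_log_div_half (a : ℝ) {s : ℝ} (hs : s ≠ 0) :
    a * log (a / (s / 2)) = a * log (a / s) + a * log 2 := by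
  rcases eq_or_ne a 0 with rfl | ha
  · simp
  rw [← mul_add, ← log_mul (div_ne_zero ha hs) two_ne_zero, div_div_eq_mul_div, mul_div_right_comm]

namespace CG

noncomputable def term (a b : ℝ) : ℝ :=
  if 0 < a + b then
    (if a = 0 then 0 else a * log (a / (a + b))) + (if b = 0 then 0 else b * log (b / (a + b)))
  else 0

/-- The pointwise integrand of `KL(a ‖ m) + KL(b ‖ m)`, `m = (a + b) / 2`. -/
noncomputable def jsTerm (a b : ℝ) : ℝ :=
  (a + b) / 2 * (klFun (a / ((a + b) / 2)) + klFun (b / ((a + b) / 2)))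

lemma eq_sum_term {C X : Type*} [Fintype C] [Fintype X] (pc qc : C → ℝ) (P Q : C → X → ℝ) :
    CG pc qc P Q = ∑ c, ∑ x, term (pc c * P c x) (qc c * Q c x) := rfl

lemma term_add_mul_log_two {a b : ℝ} (ha : 0 ≤ a) (hb : 0 ≤ b) :
    term a b + (a + b) * log 2 = jsTerm a b := by
  rcases (add_nonneg ha hb).eq_or_lt' with hs | hs
  · obtain ⟨rfl, rfl⟩ : a = 0 ∧ b = 0 := ⟨by linarith, by linarith⟩
    simp [term, jsTerm]
  have hm : (a + b) / 2 ≠ 0 := by positivity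
  have hmul_if (y : ℝ) : (if y = 0 then 0 else y * log (y / (a + b))) = y * log (y / (a + b)) := by
    split_ifs with hy <;> simp [hy]
  rw [term, if_pos hs, hmul_if, hmul_if, jsTerm, mul_add, mul_klFun_div a hm, mul_klFun_div b hm,
    mul_log_div_half a hs.ne', mul_log_div_half b hs.ne']
  ring

lemma jsTerm_nonneg {a b : ℝ} (ha : 0 ≤ a) (hb : 0 ≤ b) : 0 ≤ jsTerm a b := by
  unfold jsTerm
  have hm : 0 ≤ (a + b) / 2 := by positivity
  exact mul_nonneg hm (add_nonneg (klFun_nonneg (by positivity)) (klFun_nonneg (by positivity)))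

lemma jsTerm_eq_zero_iff {a b : ℝ} (ha : 0 ≤ a) (hb : 0 ≤ b) : jsTerm a b = 0 ↔ a = b := by
  rcases (add_nonneg ha hb).eq_or_lt' with hs | hs
  · obtain ⟨rfl, rfl⟩ : a = 0 ∧ b = 0 := ⟨by linarith, by linarith⟩
    simp [jsTerm]
  have hm : 0 < (a + b) / 2 := by positivity
  rw [jsTerm, mul_eq_zero, or_iff_right hm.ne',
    add_eq_zero_iff_of_nonneg (klFun_nonneg (by positivity)) (klFun_nonneg (by positivity)),
    klFun_eq_zero_iff (by positivity), klFun_eq_zero_iff (by positivity),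
    div_eq_one_iff_eq hm.ne', div_eq_one_iff_eq hm.ne']
  constructor
  · rintro ⟨h, -⟩; linarith
  · rintro rfl; constructor <;> ring

variable {C X : Type*} [Fintype C] [Fintype X]

lemma sum_sum_mul_eq_one {pc : C → ℝ} {P : C → X → ℝ} (hpc1 : ∑ c, pc c = 1)
    (hP1 : ∀ c, ∑ x, P c x = 1) : ∑ c, ∑ x, pc c * P c x = 1 := by
  simp_rw [← mul_sum, hP1, mul_one, hpc1]

theorem add_log_four_eq_sum_jsTerm {pc qc : C → ℝ} {P Q : C → X → ℝ}
    (hpc0 : ∀ c, 0 ≤ pc c) (hpc1 : ∑ c, pc c = 1) (hqc0 : ∀ c, 0 ≤ qc c) (hqc1 : ∑ c, qc c = 1)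
    (hP0 : ∀ c x, 0 ≤ P c x) (hP1 : ∀ c, ∑ x, P c x = 1)
    (hQ0 : ∀ c x, 0 ≤ Q c x) (hQ1 : ∀ c, ∑ x, Q c x = 1) :
    CG pc qc P Q + log 4 = ∑ c, ∑ x, jsTerm (pc c * P c x) (qc c * Q c x) := by
  have hlog4 : log 4 = (∑ c, ∑ x, pc c * P c x + ∑ c, ∑ x, qc c * Q c x) * log 2 := by
    rw [sum_sum_mul_eq_one hpc1 hP1, sum_sum_mul_eq_one hqc1 hQ1,
      show (4 : ℝ) = 2 ^ 2 by norm_num, log_pow]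
    norm_num
  rw [eq_sum_term, hlog4, ← sum_add_distrib, sum_mul, ← sum_add_distrib]
  refine sum_congr rfl fun c _ => ?_
  rw [← sum_add_distrib, sum_mul, ← sum_add_distrib]
  exact sum_congr rfl fun x _ =>
    term_add_mul_log_two (mul_nonneg (hpc0 c) (hP0 c x)) (mul_nonneg (hqc0 c) (hQ0 c x))

theorem neg_log_four_le_and_eq_iff {pc qc : C → ℝ} {P Q : C → X → ℝ}
    (hpc0 : ∀ c, 0 ≤ pc c) (hpc1 : ∑ c, pc c = 1) (hqc0 : ∀ c, 0 ≤ qc c) (hqc1 : ∑ c, qc c = 1)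
    (hP0 : ∀ c x, 0 ≤ P c x) (hP1 : ∀ c, ∑ x, P c x = 1)
    (hQ0 : ∀ c x, 0 ≤ Q c x) (hQ1 : ∀ c, ∑ x, Q c x = 1) :
    -log 4 ≤ CG pc qc P Q ∧
      (CG pc qc P Q = -log 4 ↔ ∀ c x, pc c * P c x = qc c * Q c x) := by
  have hnn (c : C) (x : X) : 0 ≤ jsTerm (pc c * P c x) (qc c * Q c x) :=
    jsTerm_nonneg (mul_nonneg (hpc0 c) (hP0 c x)) (mul_nonneg (hqc0 c) (hQ0 c x))
  have hnn' (c : C) (_ : c ∈ univ) : 0 ≤ ∑ x, jsTerm (pc c * P c x) (qc c * Q c x) :=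
    sum_nonneg fun x _ => hnn c x
  have hsum := add_log_four_eq_sum_jsTerm hpc0 hpc1 hqc0 hqc1 hP0 hP1 hQ0 hQ1
  refine ⟨by linarith [sum_nonneg hnn'], ?_⟩
  rw [← add_eq_zero_iff_eq_neg, hsum, sum_eq_zero_iff_of_nonneg hnn']
  refine forall_congr' fun c => ?_
  rw [sum_eq_zero_iff_of_nonneg fun x _ => hnn c x]
  simp only [mem_univ, true_imp_iff]
  exact forall_congr' fun x =>
    jsTerm_eq_zero_iff (mul_nonneg (hpc0 c) (hP0 c x)) (mul_nonneg (hqc0 c) (hQ0 c x))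

end CG

lemma forall_mul_eq_mul_iff {C X : Type*} {pc : C → ℝ} (hpc0 : ∀ c, 0 ≤ pc c) {P Q : C → X → ℝ} :
    (∀ c x, pc c * P c x = pc c * Q c x) ↔ ∀ c, 0 < pc c → P c = Q c := by
  refine forall_congr' fun c => ?_
  rcases (hpc0 c).eq_or_lt with h | h
  · simp [← h]
  · simp [h, h.ne', funext_iff]

theorem CG_matched_categories_general
    {C X : Type*} [Fintype C] [Fintype X]
    (pc qc : C → ℝ)
    (hpc0 : ∀ c, 0 ≤ pc c) (hpc1 : ∑ c, pc c = 1)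
    (hpq : pc = qc)
    (P Q : C → X → ℝ)
    (hP0 : ∀ c x, 0 ≤ P c x) (hP1 : ∀ c, ∑ x, P c x = 1)
    (hQ0 : ∀ c x, 0 ≤ Q c x) (hQ1 : ∀ c, ∑ x, Q c x = 1) :
    CG pc qc P Q ≥ -Real.log 4 ∧
    (CG pc qc P Q = -Real.log 4 ↔ ∀ c, 0 < pc c → P c = Q c) := by
  subst hpq
  rw [← forall_mul_eq_mul_iff hpc0]
  exact CG.neg_log_four_le_and_eq_iff hpc0 hpc1 hpc0 hpc1 hP0 hP1 hQ0 hQ1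

/-- When the input category distribution matches the target category distribution
(`p_c = q_c`), the weakly supervised GAN criterion recovers the classical GAN optimum:
`C(G) ≥ − log 4`, with equality iff `P c = Q c` on every category of positive weight. -/
theorem CG_matched_categories
    {C X : Type*} [Fintype C] [Fintype X]
    (pc qc : C → ℝ)
    (hpc0 : ∀ c, 0 ≤ pc c) (hpc1 : ∑ c, pc c = 1)
    (hqc0 : ∀ c, 0 ≤ qc c) (hqc1 : ∑ c, qc c = 1)
    (hpq : pc = qc)
    (P Q : C → X → ℝ)
    (hP0 : ∀ c x, 0 ≤ P c x) (hP1 : ∀ c, ∑ x, P c x = 1)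
    (hQ0 : ∀ c x, 0 ≤ Q c x) (hQ1 : ∀ c, ∑ x, Q c x = 1) :
    CG pc qc P Q ≥ -Real.log 4 ∧
    (CG pc qc P Q = -Real.log 4 ↔ ∀ c, 0 < pc c → P c = Q c) :=
  CG_matched_categories_general pc qc hpc0 hpc1 hpq P Q hP0 hP1 hQ0 hQ1
end
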